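/- Let n = 2p be an even integer with letter indices taken modulo n, let N ≥ 2, and for a configuration X : Fin N → Fin n let N^k(X) = #{ j : X_j = k }. Suppose X has X_i = k and X_{i+1} = k+p at adjacent sites i, i+1, and let X' be obtained from X by the fold rotation X'_i = k+1, X'_{i+1} = k+p+1, X'_j = X_j elsewhere. Then for every letter l, N^{l+p}(X') − N^l(X') = N^{l+p}(X) − N^l(X); that is, the differences Δ^l = N^{l+p} − N^l between populations of links with opposite directions are conserved by fold rotations. -/

import Mathlib

open Finset
open Fin.NatCast

/-!
Write `Δ^l(X) = ∑ⱼ w(Xⱼ)` with the site weight `w(x) = [x = l + p] - [x = l]`. Since `p + p = 0`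
modulo `n = 2p`, shifting a letter by `p` flips the sign of its weight, so any pair of opposite
letters `(x, x + p)` carries total weight zero. A fold rotation replaces one opposite pair by
another and leaves every other site alone, hence it does not change `Δ^l`.
-/

section OppositeWeight

variable {G : Type*} [AddGroup G] [DecidableEq G]

def oppositeWeight (p l x : G) : ℤ :=
  (if x = l + p then 1 else 0) - (if x = l then 1 else 0)

theorem oppositeWeight_add_add_self {p : G} (hp : p + p = 0) (l x : G) :
    oppositeWeight p l x + oppositeWeight p l (x + p) = 0 := by
  have hneg : -p = p := neg_eq_of_add_eq_zero_right hp
  have hshift : x + p = l ↔ x = l + p := by rw [← eq_sub_iff_add_eq, sub_eq_add_neg, hneg]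
  simp only [oppositeWeight, add_left_inj, hshift]
  split_ifs <;> simp

theorem intCast_card_filter_sub_card_filter_eq_sum {ι : Type*} [Fintype ι] (X : ι → G)
    (p l : G) :
    ((#{j | X j = l + p} : ℕ) : ℤ) - (#{j | X j = l} : ℕ) = ∑ j, oppositeWeight p l (X j) := by
  simp only [oppositeWeight, sum_sub_distrib, natCast_card_filter]

end OppositeWeight

theorem Fintype.sum_comp_eq_of_eq_off_pair {ι α M : Type*} [Fintype ι] [DecidableEq ι]
    [AddCommMonoid M] (g : α → M) {X X' : ι → α} {a b : ι} (hab : a ≠ b)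
    (hpair : g (X' a) + g (X' b) = g (X a) + g (X b))
    (hrest : ∀ j, j ≠ a → j ≠ b → X' j = X j) :
    ∑ j, g (X' j) = ∑ j, g (X j) := by
  rw [← sum_add_sum_compl {a, b}, ← sum_add_sum_compl {a, b} (fun j ↦ g (X j)),
    sum_pair hab, sum_pair hab, hpair]
  congr 1
  refine Finset.sum_congr rfl fun j hj ↦ ?_
  simp only [mem_compl, mem_insert, mem_singleton, not_or] at hj
  rw [hrest j hj.1 hj.2]

/-- In the even alphabet model (`n = 2p`, letters mod `n`), the fold rotation
`(k, k+p) ↦ (k+1, k+p+1)` at adjacent sites conserves, for every letter `l`, the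
difference `Δ^l = N^{l+p} − N^l` between the populations of links with opposite
directions. -/
theorem fold_rotation_conserves_delta (p n N : ℕ) (hn : n = 2 * p) [NeZero n]
    (X X' : Fin N → Fin n) (i : ℕ) (hi : i + 1 < N) (k : Fin n)
    (hXi : X ⟨i, by omega⟩ = k) (hXi1 : X ⟨i + 1, hi⟩ = k + (p : Fin n))
    (hX'i : X' ⟨i, by omega⟩ = k + 1) (hX'i1 : X' ⟨i + 1, hi⟩ = k + (p : Fin n) + 1)
    (hX'other : ∀ j : Fin N, j ≠ ⟨i, by omega⟩ → j ≠ ⟨i + 1, hi⟩ → X' j = X j) :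
    ∀ l : Fin n,
      ((Finset.univ.filter (fun j : Fin N => X' j = l + (p : Fin n))).card : ℤ) -
          ((Finset.univ.filter (fun j : Fin N => X' j = l)).card : ℤ) =
        ((Finset.univ.filter (fun j : Fin N => X j = l + (p : Fin n))).card : ℤ) -
          ((Finset.univ.filter (fun j : Fin N => X j = l)).card : ℤ) := by
  intro l
  have hpp : (p : Fin n) + p = 0 := by
    rw [← Nat.cast_add, ← two_mul, ← hn, Fin.natCast_self]
  rw [intCast_card_filter_sub_card_filter_eq_sum, intCast_card_filter_sub_card_filter_eq_sum]
  refine Fintype.sum_comp_eq_of_eq_off_pair _ (by simp [Fin.ext_iff]) ?_ hX'other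
  rw [hXi, hXi1, hX'i, hX'i1, add_right_comm, oppositeWeight_add_add_self hpp,
    oppositeWeight_add_add_self hpp]
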